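/- The simplex S_d = conv{−𝟙, e₁, …, e_d} ⊂ ℝ^d has lattice diameter 1 + 1/d with respect to ℤ^d, and is lattice complete with respect to ℤ^d. -/

import Mathlib

open scoped Pointwise

noncomputable section

/-- Standard dot product on `Fin d → ℝ`. -/
def dot {d : ℕ} (x y : Fin d → ℝ) : ℝ := ∑ i, x i * y i

/-- A convex body: convex, compact, with nonempty interior. -/
def IsConvexBody {d : ℕ} (C : Set (Fin d → ℝ)) : Prop :=
  Convex ℝ C ∧ IsCompact C ∧ (interior C).Nonempty

/-- A full-dimensional lattice: the integer span of a basis of `ℝ^d`. -/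
def IsLattice {d : ℕ} (L : Set (Fin d → ℝ)) : Prop :=
  ∃ B : Module.Basis (Fin d) ℝ (Fin d → ℝ),
    L = Set.range (fun z : Fin d → ℤ => ∑ i, (z i : ℝ) • B i)

/-- The dual lattice: vectors pairing integrally with all lattice vectors. -/
def dualLattice {d : ℕ} (L : Set (Fin d → ℝ)) : Set (Fin d → ℝ) :=
  {y | ∀ x ∈ L, ∃ n : ℤ, dot x y = (n : ℝ)}

/-- Width of `C` in direction `y`: `sup_{a,b ∈ C} y·(a-b)`. -/
def widthDir {d : ℕ} (C : Set (Fin d → ℝ)) (y : Fin d → ℝ) : ℝ :=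
  sSup {r | ∃ a ∈ C, ∃ b ∈ C, r = dot y (a - b)}

/-- Lattice width of `C` with respect to a lattice `L`. -/
def latticeWidth {d : ℕ} (C L : Set (Fin d → ℝ)) : ℝ :=
  sInf {w | ∃ y ∈ dualLattice L, y ≠ 0 ∧ w = widthDir C y}

/-- A primitive lattice vector: a nonzero lattice vector such that no proper
fraction of it is a lattice vector. -/
def IsPrimitiveVec {d : ℕ} (L : Set (Fin d → ℝ)) (v : Fin d → ℝ) : Prop :=
  v ∈ L ∧ v ≠ 0 ∧ ∀ t : ℝ, 0 < t → t < 1 → t • v ∉ L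

/-- Lattice diameter of `C` w.r.t. `L`: the supremum of lattice lengths of
lattice segments contained in `C`, a segment of lattice length `t` being one of
the form `[a, a + t • v]` with `v` primitive in `L`. -/
def latticeDiam {d : ℕ} (C L : Set (Fin d → ℝ)) : ℝ :=
  sSup {t : ℝ | 0 ≤ t ∧ ∃ a v, IsPrimitiveVec L v ∧ segment ℝ a (a + t • v) ⊆ C}

/-- The polar body `K* = {y : x·y ≤ 1 ∀ x ∈ K}`. -/
def polarBody {d : ℕ} (K : Set (Fin d → ℝ)) : Set (Fin d → ℝ) :=
  {y | ∀ x ∈ K, dot x y ≤ 1}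

/-- First successive minimum of `K` w.r.t. the lattice `L`. -/
def lambda1 {d : ℕ} (K L : Set (Fin d → ℝ)) : ℝ :=
  sInf {r : ℝ | 0 ≤ r ∧ ∃ x ∈ L, x ≠ 0 ∧ x ∈ r • K}

/-- The difference body `C - C`. -/
def diffBody {d : ℕ} (C : Set (Fin d → ℝ)) : Set (Fin d → ℝ) := C - C

/-- `C` is lattice reduced w.r.t. `L`: it is a convex body and no convex body
properly contained in it has the same lattice width. -/
def IsLatticeReduced {d : ℕ} (C L : Set (Fin d → ℝ)) : Prop :=
  IsConvexBody C ∧ ∀ C', IsConvexBody C' → C' ⊂ C → latticeWidth C' L ≠ latticeWidth C L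

/-- `C` is lattice complete w.r.t. `L`: it is a convex body and no convex body
properly containing it has the same lattice diameter. -/
def IsLatticeComplete {d : ℕ} (C L : Set (Fin d → ℝ)) : Prop :=
  IsConvexBody C ∧ ∀ C', IsConvexBody C' → C ⊂ C' → latticeDiam C' L ≠ latticeDiam C L

/-- A width direction of `C`: a nonzero dual lattice vector realizing the
lattice width. -/
def IsWidthDirection {d : ℕ} (C L : Set (Fin d → ℝ)) (y : Fin d → ℝ) : Prop :=
  y ∈ dualLattice L ∧ y ≠ 0 ∧ widthDir C y = latticeWidth C L

/-- A diameter direction of `C`: a primitive lattice vector parallel to a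
lattice segment in `C` of maximal lattice length. -/
def IsDiameterDirection {d : ℕ} (C L : Set (Fin d → ℝ)) (v : Fin d → ℝ) : Prop :=
  IsPrimitiveVec L v ∧ ∃ a, segment ℝ a (a + latticeDiam C L • v) ⊆ C

/-- A diameter segment of `C`: a lattice segment contained in `C` whose lattice
length equals the lattice diameter of `C`. -/
def IsDiameterSegment {d : ℕ} (C L : Set (Fin d → ℝ)) (a b : Fin d → ℝ) : Prop :=
  segment ℝ a b ⊆ C ∧ ∃ v, IsPrimitiveVec L v ∧ b = a + latticeDiam C L • v

/-- A polytope: the convex hull of finitely many points. -/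
def IsPolytope {d : ℕ} (C : Set (Fin d → ℝ)) : Prop :=
  ∃ V : Finset (Fin d → ℝ), C = convexHull ℝ (V : Set (Fin d → ℝ))

/-- A facet of a `d`-dimensional body: a face (extreme subset) of dimension `d-1`. -/
def IsFacetOf {d : ℕ} (P F : Set (Fin d → ℝ)) : Prop :=
  IsExtreme ℝ P F ∧ Module.finrank ℝ (vectorSpan ℝ F) + 1 = d

/-- The integer lattice `ℤ^d` inside `Fin d → ℝ`. -/
def intLattice (d : ℕ) : Set (Fin d → ℝ) := {x | ∀ i, ∃ n : ℤ, x i = (n : ℝ)}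

/-- The simplex `S_d = conv{-𝟙, e₁, …, e_d}`. -/
def simplexS (d : ℕ) : Set (Fin d → ℝ) :=
  convexHull ℝ (insert (fun _ : Fin d => (-1 : ℝ))
    (Set.range (fun i : Fin d => (Pi.single i (1 : ℝ) : Fin d → ℝ))))

/-!
Let `F_k`, for `k` ranging over the `d + 1` vertices `v_k` of `S_d`, be `d + 1` times the
barycentric coordinate of `v_k`; thus `S_d = {F ≥ 0}` and `∑ F_k = d + 1`. For `v ∈ ℤ^d \ {0}`
the slopes `F_k.linear v` are integers that are pairwise congruent mod `d + 1`, sum to `0` and do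
not all vanish; double counting over pairs of a positive and a non-positive slope shows that their
positive parts sum to at least `d`. Along a segment `[a, a + t • v] ⊆ S_d` those positive parts,
times `t`, are bounded by `∑ F_k (a + t • v) = d + 1`, so `t ≤ 1 + 1/d`. Equality holds for the
segment from `v_k` to `-(1/d) • v_k`, the centroid of the opposite facet. As that centroid is
interior to its facet, a point beyond the facet lets the segment be prolonged inside the convex
hull, so no proper convex extension of `S_d` keeps the lattice diameter.
-/

open Filter Topology

theorem AffineMap.map_add_eq_add_linear {k V W : Type*} [Ring k] [AddCommGroup V] [Module k V]
    [AddCommGroup W] [Module k W] (f : V →ᵃ[k] W) (x v : V) : f (x + v) = f x + f.linear v := by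
  rw [add_comm x, ← vadd_eq_add, AffineMap.map_vadd, vadd_eq_add, add_comm]

section Polyhedron

variable {ι E : Type*} [Finite ι]

theorem mem_interior_of_forall_pos [NormedAddCommGroup E] [NormedSpace ℝ E]
    [FiniteDimensional ℝ E] (F : ι → E →ᵃ[ℝ] ℝ) {x : E} (hx : ∀ k, 0 < F k x) :
    x ∈ interior {y | ∀ k, 0 ≤ F k y} :=
  mem_interior_iff_mem_nhds.2 <| eventually_all.2 fun k =>
    ((F k).continuous_of_finiteDimensional.tendsto x |>.eventually (lt_mem_nhds (hx k))).mono
      fun _ h => h.le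

theorem exists_add_smul_mem_segment_of_facet [AddCommGroup E] [Module ℝ E]
    (F : ι → E →ᵃ[ℝ] ℝ) {i : ι} {b u p : E} (hbi : 0 ≤ F i b) (hb : ∀ k ≠ i, 0 < F k b)
    (hu : (F i).linear u < 0) (hp : F i p < 0) :
    ∃ ε : ℝ, 0 < ε ∧ ∃ q, (∀ k, 0 ≤ F k q) ∧ b + ε • u ∈ segment ℝ q p := by
  set c := F i p / (F i).linear u
  have hc : 0 < c := div_pos_of_neg_of_neg hp hu
  -- `q = b + s • w` is chosen so that `b + (c * s / (1 + s)) • u` divides `[q, p]` in ratio `s : 1`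
  set w := c • u - (p - b)
  have hwi : (F i).linear w = F i b := by
    rw [map_sub, ← vsub_eq_sub p b, AffineMap.linearMap_vsub, map_smul, smul_eq_mul,
      div_mul_cancel₀ _ hu.ne, vsub_eq_sub]
    ring
  have hsmall : ∀ᶠ s in 𝓝[>] (0 : ℝ), ∀ k, k ≠ i → 0 < F k b + s * (F k).linear w := by
    refine eventually_all.2 fun k => ?_
    by_cases hk : k = i
    · exact .of_forall fun _ h => absurd hk h
    · have hcont : Continuous fun s : ℝ => F k b + s * (F k).linear w := by fun_prop
      exact ((hcont.tendsto' 0 _ (by simp)).eventually (lt_mem_nhds (hb k hk))).filter_mono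
        nhdsWithin_le_nhds |>.mono fun _ h _ => h
  obtain ⟨s, hs, hs0⟩ := (hsmall.and self_mem_nhdsWithin).exists
  refine ⟨c * s / (1 + s), by positivity, b + s • w, fun k => ?_, ?_⟩
  · rw [AffineMap.map_add_eq_add_linear, map_smul, smul_eq_mul]
    by_cases hk : k = i
    · subst hk
      rw [hwi]
      positivity
    · exact (hs k hk).le
  · refine ⟨1 / (1 + s), s / (1 + s), by positivity, by positivity, by field_simp, ?_⟩
    have : 1 + s ≠ 0 := by positivity
    simp only [w]
    match_scalars <;> field_simp
    ring

end Polyhedron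

open Finset in
theorem card_sub_one_le_sum_max_zero {ι : Type*} [Fintype ι] {W : ι → ℤ}
    (hdvd : ∀ k l, (Fintype.card ι : ℤ) ∣ W k - W l) (hsum : ∑ k, W k = 0) (hW : W ≠ 0) :
    (Fintype.card ι : ℤ) - 1 ≤ ∑ k, max (W k) 0 := by
  classical
  set P := univ.filter (0 < W ·)
  set N := univ.filter (fun k => ¬ 0 < W k)
  have hmax : ∑ k, max (W k) 0 = ∑ k ∈ P, W k := by
    rw [sum_filter]
    exact sum_congr rfl fun k _ => by split_ifs <;> omega
  have hsplit : ∑ k ∈ P, W k + ∑ k ∈ N, W k = 0 := by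
    rw [sum_filter_add_sum_filter_not, hsum]
  have hcard : (#P : ℤ) + #N = Fintype.card ι := by
    exact_mod_cast card_filter_add_card_filter_not (s := univ) (p := (0 < W ·))
  have hP : P.Nonempty := by
    by_contra h
    have hnonpos : ∀ k ∈ univ, W k ≤ 0 := fun k _ => by
      by_contra hk
      exact h ⟨k, mem_filter.2 ⟨mem_univ _, by omega⟩⟩
    exact hW (funext fun k => (sum_eq_zero_iff_of_nonpos hnonpos).1 hsum k (mem_univ _))
  have hN : N.Nonempty := by
    by_contra h
    have : 0 < ∑ k ∈ P, W k := sum_pos (fun k hk => (mem_filter.1 hk).2) hP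
    rw [not_nonempty_iff_eq_empty.1 h, sum_empty] at hsplit
    omega
  have hgap : ∀ k ∈ P, ∀ l ∈ N, (#P + #N : ℤ) ≤ W k - W l := fun k hk l hl => hcard ▸
    Int.le_of_dvd (by linarith [(mem_filter.1 hk).2, (mem_filter.1 hl).2]) (hdvd k l)
  -- double counting: `card ι * ∑ k, max (W k) 0 = ∑ k ∈ P, ∑ l ∈ N, (W k - W l)`
  have hdouble : ∑ k ∈ P, ∑ _l ∈ N, (#P + #N : ℤ) ≤ ∑ k ∈ P, ∑ l ∈ N, (W k - W l) :=
    sum_le_sum fun k hk => sum_le_sum fun l hl => hgap k hk l hl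
  simp only [sum_sub_distrib, sum_const, nsmul_eq_mul, ← mul_sum] at hdouble
  rw [show ∑ k ∈ N, W k = -∑ k ∈ P, W k by omega] at hdouble
  have hp : (1 : ℤ) ≤ #P := by exact_mod_cast hP.card_pos
  have hn : (1 : ℤ) ≤ #N := by exact_mod_cast hN.card_pos
  have hpn : (#P : ℤ) * #N ≤ ∑ k ∈ P, W k :=
    le_of_mul_le_mul_left (a := (#P + #N : ℤ)) (by linear_combination hdouble) (by omega)
  rw [hmax, ← hcard]
  nlinarith

theorem one_le_norm_of_mem_intLattice {d : ℕ} {v : Fin d → ℝ} (hv : v ∈ intLattice d)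
    (hv0 : v ≠ 0) : 1 ≤ ‖v‖ := by
  obtain ⟨i, hi⟩ := Function.ne_iff.1 hv0
  obtain ⟨n, hn⟩ := hv i
  have hn0 : n ≠ 0 := by rintro rfl; simp [hn] at hi
  calc (1 : ℝ) ≤ |(n : ℝ)| := by exact_mod_cast Int.one_le_abs hn0
    _ = ‖v i‖ := by rw [hn, Real.norm_eq_abs]
    _ ≤ ‖v‖ := norm_le_pi_norm v i

theorem isPrimitiveVec_intLattice_of_abs_eq_one {d : ℕ} {v : Fin d → ℝ} {i : Fin d}
    (hv : v ∈ intLattice d) (hi : |v i| = 1) : IsPrimitiveVec (intLattice d) v := by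
  refine ⟨hv, fun h => by simp [h] at hi, fun t ht0 ht1 htv => ?_⟩
  obtain ⟨n, hn⟩ := htv i
  have habs : |(n : ℝ)| = t := by
    rw [← hn, Pi.smul_apply, smul_eq_mul, abs_mul, hi, mul_one, abs_of_pos ht0]
  have h0 : (0 : ℤ) < |n| := by exact_mod_cast habs ▸ ht0
  have h1 : |n| < 1 := by exact_mod_cast habs ▸ ht1
  omega

theorem le_latticeDiam {d : ℕ} {C : Set (Fin d → ℝ)} (hC : IsCompact C) {a v : Fin d → ℝ}
    {t : ℝ} (ht : 0 ≤ t) (hv : IsPrimitiveVec (intLattice d) v)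
    (hseg : segment ℝ a (a + t • v) ⊆ C) : t ≤ latticeDiam C (intLattice d) := by
  refine le_csSup ⟨Metric.diam C, ?_⟩ ⟨ht, a, v, hv, hseg⟩
  rintro s ⟨hs, a, v, ⟨hvL, hv0, -⟩, hseg⟩
  calc s ≤ s * ‖v‖ := le_mul_of_one_le_right hs (one_le_norm_of_mem_intLattice hvL hv0)
    _ = dist (a + s • v) a := by rw [dist_eq_norm, add_sub_cancel_left, norm_smul,
        Real.norm_of_nonneg hs]
    _ ≤ Metric.diam C := Metric.dist_le_diam_of_mem hC.isBounded
        (hseg (right_mem_segment ℝ _ _)) (hseg (left_mem_segment ℝ _ _))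

/-- The facet criterion: `∀ k ≠ i, 0 < F k b` says that `b` lies in the relative interior of the
facet `F i = 0`, and `F i b < F i a` that the diameter segment `[a, b]` leaves `S` through it. -/
theorem isLatticeComplete_of_forall_facet {d : ℕ} {ι : Type*} [Finite ι]
    (F : ι → (Fin d → ℝ) →ᵃ[ℝ] ℝ) {S : Set (Fin d → ℝ)} (hS : IsConvexBody S)
    (hSF : S = {x | ∀ k, 0 ≤ F k x})
    (hfacet : ∀ i, ∃ a b, IsDiameterSegment S (intLattice d) a b ∧ (∀ k ≠ i, 0 < F k b) ∧
      F i b < F i a) :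
    IsLatticeComplete S (intLattice d) := by
  refine ⟨hS, fun C hC hSC hdiam => ?_⟩
  obtain ⟨p, hpC, hpS⟩ := Set.exists_of_ssubset hSC
  obtain ⟨i, hpi⟩ : ∃ i, F i p < 0 := by simpa [hSF] using hpS
  obtain ⟨a, b, ⟨hab, v, hv, rfl⟩, hb, hba⟩ := hfacet i
  set D := latticeDiam S (intLattice d)
  have hbS : a + D • v ∈ {x | ∀ k, 0 ≤ F k x} := hSF ▸ hab (right_mem_segment ℝ _ _)
  rw [AffineMap.map_add_eq_add_linear, add_lt_iff_neg_left] at hba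
  obtain ⟨ε, hε, q, hq, hqp⟩ := exists_add_smul_mem_segment_of_facet F (hbS i) hb hba hpi
  have hD : 0 < D := by
    refine lt_of_le_of_ne (Real.sSup_nonneg fun t ht => ht.1) fun h => ?_
    simp [← h] at hba
  have hext : segment ℝ a (a + (D * (1 + ε)) • v) ⊆ C := by
    refine hC.1.segment_subset (hSC.subset (hab (left_mem_segment ℝ _ _))) ?_
    convert hC.1.segment_subset (hSC.subset (hSF ▸ hq)) hpC hqp using 1
    module
  have := le_latticeDiam hC.2.1 (by positivity) hv hext
  rw [hdiam] at this
  nlinarith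

def simplexVertex (d : ℕ) : Option (Fin d) → Fin d → ℝ
  | none => fun _ => -1
  | some i => Pi.single i 1

/-- `d + 1` times the barycentric coordinate of `simplexVertex d k`. -/
def simplexFacet (d : ℕ) (k : Option (Fin d)) : (Fin d → ℝ) →ᵃ[ℝ] ℝ where
  toFun x := (d + 1) * k.elim 0 x - ∑ j, x j + 1
  linear := (d + 1 : ℝ) • k.elim 0 LinearMap.proj - ∑ j, LinearMap.proj j
  map_vadd' x v := by
    cases k <;> simp [Finset.sum_add_distrib] <;> ring

theorem simplexFacet_apply (d : ℕ) (k : Option (Fin d)) (x : Fin d → ℝ) :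
    simplexFacet d k x = (d + 1) * k.elim 0 x - ∑ j, x j + 1 := rfl

theorem simplexFacet_linear_apply (d : ℕ) (k : Option (Fin d)) (x : Fin d → ℝ) :
    (simplexFacet d k).linear x = (d + 1) * k.elim 0 x - ∑ j, x j := by
  cases k <;> simp [simplexFacet]

theorem simplexFacet_simplexVertex (d : ℕ) (k l : Option (Fin d)) :
    simplexFacet d k (simplexVertex d l) = if k = l then (d + 1 : ℝ) else 0 := by
  cases k <;> cases l <;> simp [simplexFacet_apply, simplexVertex, Pi.single_apply]

theorem sum_simplexFacet (d : ℕ) (x : Fin d → ℝ) : ∑ k, simplexFacet d k x = d + 1 := by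
  simp [Fintype.sum_option, simplexFacet_apply, Finset.sum_add_distrib, ← Finset.mul_sum]

theorem sum_simplexFacet_smul_simplexVertex (d : ℕ) (x : Fin d → ℝ) :
    ∑ k, simplexFacet d k x • simplexVertex d k = (d + 1 : ℝ) • x := by
  ext j
  simp [Fintype.sum_option, simplexFacet_apply, simplexVertex, Pi.single_apply]
  ring

theorem simplexS_eq_convexHull_range (d : ℕ) :
    simplexS d = convexHull ℝ (Set.range (simplexVertex d)) := by
  rw [simplexS, Option.range_eq]
  rfl

theorem simplexS_eq_setOf_simplexFacet (d : ℕ) :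
    simplexS d = {x | ∀ k, 0 ≤ simplexFacet d k x} := by
  rw [simplexS_eq_convexHull_range]
  apply subset_antisymm
  · refine convexHull_min ?_ ?_
    · rintro _ ⟨l, rfl⟩ k
      rw [simplexFacet_simplexVertex]
      split_ifs <;> positivity
    · simp only [Set.ofPred_forall]
      exact convex_iInter fun k => (convex_Ici 0).affine_preimage (simplexFacet d k)
  · intro x hx
    have hx' : x = Finset.univ.centerMass (simplexFacet d · x) (simplexVertex d) := by
      rw [Finset.centerMass, sum_simplexFacet, sum_simplexFacet_smul_simplexVertex, inv_smul_smul₀]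
      positivity
    rw [hx']
    exact Finset.centerMass_mem_convexHull _ (fun k _ => hx k)
      (by rw [sum_simplexFacet]; positivity) fun k _ => Set.mem_range_self k

theorem mul_le_of_mem_simplexS {d : ℕ} {a v : Fin d → ℝ} {t : ℝ} (ht : 0 ≤ t)
    (hv : v ∈ intLattice d) (hv0 : v ≠ 0) (ha : a ∈ simplexS d) (hb : a + t • v ∈ simplexS d) :
    t * d ≤ d + 1 := by
  rw [simplexS_eq_setOf_simplexFacet] at ha hb
  choose n hn using hv
  obtain rfl : v = fun i => (n i : ℝ) := funext hn
  set W : Option (Fin d) → ℤ := fun k => (d + 1) * k.elim 0 n - ∑ j, n j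
  have hlinear : ∀ k, (simplexFacet d k).linear (fun i => (n i : ℝ)) = W k := fun k => by
    cases k <;> simp [simplexFacet_linear_apply, W]
  have hdvd : ∀ k l, (Fintype.card (Option (Fin d)) : ℤ) ∣ W k - W l := fun k l =>
    ⟨k.elim 0 n - l.elim 0 n, by
      simp only [W, Fintype.card_option, Fintype.card_fin]
      push_cast
      ring⟩
  have hsum : ∑ k, W k = 0 := by
    simp [W, Fintype.sum_option, Finset.mul_sum]
  have hW0 : W ≠ 0 := by
    intro h
    apply hv0
    funext i
    have h0 := congrFun h none
    have hi := congrFun h (some i)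
    simp only [W, Option.elim_none, Option.elim_some, Pi.zero_apply] at h0 hi
    simp only [Pi.zero_apply, Int.cast_eq_zero]
    nlinarith
  have hcount : (d : ℝ) ≤ ∑ k, max (W k : ℝ) 0 := by
    have := card_sub_one_le_sum_max_zero hdvd hsum hW0
    simp only [Fintype.card_option, Fintype.card_fin] at this
    exact_mod_cast (by omega : (d : ℤ) ≤ ∑ k, max (W k) 0)
  calc t * d ≤ t * ∑ k, max (W k : ℝ) 0 := mul_le_mul_of_nonneg_left hcount ht
    _ = ∑ k, max (simplexFacet d k (a + t • _) - simplexFacet d k a) 0 := by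
      simp only [Finset.mul_sum, mul_max_of_nonneg _ _ ht, AffineMap.map_add_eq_add_linear,
        LinearMap.map_smul, hlinear, smul_eq_mul, add_sub_cancel_left, mul_zero]
    _ ≤ ∑ k, simplexFacet d k (a + t • _) :=
      Finset.sum_le_sum fun k _ => max_le (sub_le_self _ (ha k)) (hb k)
    _ = d + 1 := sum_simplexFacet d _

theorem isConvexBody_simplexS (d : ℕ) : IsConvexBody (simplexS d) := by
  refine ⟨?_, ?_, ⟨0, ?_⟩⟩
  · rw [simplexS_eq_convexHull_range]
    exact convex_convexHull ℝ _
  · rw [simplexS_eq_convexHull_range]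
    exact (Set.finite_range _).isCompact_convexHull (𝕜 := ℝ)
  · rw [simplexS_eq_setOf_simplexFacet]
    exact mem_interior_of_forall_pos _ fun k => by cases k <;> simp [simplexFacet_apply]

theorem isPrimitiveVec_neg_simplexVertex {d : ℕ} (hd : 0 < d) (k : Option (Fin d)) :
    IsPrimitiveVec (intLattice d) (-simplexVertex d k) := by
  rcases k with _ | i
  · refine isPrimitiveVec_intLattice_of_abs_eq_one (i := ⟨0, hd⟩) (fun _ => ⟨1, ?_⟩) ?_ <;>
      simp [simplexVertex]
  · refine isPrimitiveVec_intLattice_of_abs_eq_one (i := i)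
      (fun j => ⟨if j = i then -1 else 0, ?_⟩) ?_
    · simp only [simplexVertex, Pi.neg_apply, Pi.single_apply]
      split_ifs <;> simp
    · simp [simplexVertex]

theorem simplexFacet_smul (d : ℕ) (k : Option (Fin d)) (c : ℝ) (x : Fin d → ℝ) :
    simplexFacet d k (c • x) = c * (simplexFacet d k x - 1) + 1 := by
  cases k <;> simp [simplexFacet_apply, ← Finset.mul_sum]
  ring

theorem simplexFacet_neg_div_smul_simplexVertex {d : ℕ} (hd : 0 < d) (k l : Option (Fin d)) :
    simplexFacet d k (-(1 / d : ℝ) • simplexVertex d l) =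
      if k = l then 0 else ((d : ℝ) + 1) / d := by
  have hdR : (d : ℝ) ≠ 0 := by positivity
  rw [simplexFacet_smul, simplexFacet_simplexVertex]
  split_ifs <;> field_simp <;> ring

theorem segment_simplexVertex_subset {d : ℕ} (hd : 0 < d) (k : Option (Fin d)) :
    segment ℝ (simplexVertex d k) (-(1 / d : ℝ) • simplexVertex d k) ⊆ simplexS d := by
  rw [simplexS_eq_convexHull_range]
  refine (convex_convexHull ℝ _).segment_subset (subset_convexHull ℝ _ (Set.mem_range_self k)) ?_
  rw [← simplexS_eq_convexHull_range, simplexS_eq_setOf_simplexFacet]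
  intro l
  rw [simplexFacet_neg_div_smul_simplexVertex hd]
  split_ifs <;> positivity

theorem latticeDiam_simplexS {d : ℕ} (hd : 0 < d) :
    latticeDiam (simplexS d) (intLattice d) = 1 + 1 / (d : ℝ) := by
  have hdR : (0 : ℝ) < d := by exact_mod_cast hd
  refine IsGreatest.csSup_eq ⟨⟨by positivity, simplexVertex d none, _,
    isPrimitiveVec_neg_simplexVertex hd none, ?_⟩, ?_⟩
  · convert segment_simplexVertex_subset hd none using 2
    module
  · rintro t ⟨ht, a, v, ⟨hvL, hv0, -⟩, hseg⟩
    have := mul_le_of_mem_simplexS ht hvL hv0 (hseg (left_mem_segment ℝ _ _))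
      (hseg (right_mem_segment ℝ _ _))
    rwa [show 1 + 1 / (d : ℝ) = (d + 1) / d by field_simp, le_div_iff₀ hdR]

/-- `S_d` has lattice diameter `1 + 1/d` w.r.t. `ℤ^d` and is
lattice complete w.r.t. `ℤ^d`. -/
theorem simplexS_diam_and_complete (d : ℕ) (hd : 0 < d) :
    latticeDiam (simplexS d) (intLattice d) = 1 + 1 / (d : ℝ) ∧
    IsLatticeComplete (simplexS d) (intLattice d) := by
  have hdiam := latticeDiam_simplexS hd
  refine ⟨hdiam, isLatticeComplete_of_forall_facet (simplexFacet d) (isConvexBody_simplexS d)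
    (simplexS_eq_setOf_simplexFacet d) fun k =>
      ⟨simplexVertex d k, -(1 / d : ℝ) • simplexVertex d k,
        ⟨segment_simplexVertex_subset hd k, _, isPrimitiveVec_neg_simplexVertex hd k, ?_⟩, ?_, ?_⟩⟩
  · rw [hdiam]
    module
  · intro l hl
    rw [simplexFacet_neg_div_smul_simplexVertex hd, if_neg hl]
    exact div_pos (by positivity) (Nat.cast_pos.2 hd)
  · rw [simplexFacet_neg_div_smul_simplexVertex hd, if_pos rfl, simplexFacet_simplexVertex,
      if_pos rfl]
    positivity
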